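/- arXiv:2007.09040 — 5 statements merged into one kernel-verified Lean document; each statement's English description precedes it below -/
import Mathlib

section
/- Let g be a metric Lie algebra with no non-zero abelian orthogonal factor (equivalently Z(g) ⊆ [g,g]). If f₁, f₂: g → g are linear maps each satisfying [fⱼ(X),Y] = fⱼ([X,Y]) for all X,Y ∈ g, and each fⱼ is either symmetric or skew-symmetric with respect to the inner product, then f₁ and f₂ commute: f₁∘f₂ = f₂∘f₁. -/
/-!
Put `c = f₁ f₂ - f₂ f₁`. Both `f₁` and `f₂` commute with every `ad X`, so `c` kills `[g, g]`
and every `c X` is central. Since `Z(g) ⊆ [g, g]`, this gives `c² = 0`. The adjoint of each `fⱼ`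
is `±fⱼ`, hence the adjoint of `c` is `±c`, and then `⟪c X, c X⟫ = ±⟪X, c² X⟫ = 0` forces `c = 0`.
-/

open scoped RealInnerProductSpace TensorProduct

/-- A metric Lie algebra: a real Lie algebra equipped with a positive definite inner product. -/
class MetricLieAlgebra (g : Type*) [LieRing g] [LieAlgebra ℝ g] [Inner ℝ g] : Prop where
  inner_add_left : ∀ x y z : g, ⟪x + y, z⟫ = ⟪x, z⟫ + ⟪y, z⟫
  inner_smul_left : ∀ (r : ℝ) (x y : g), ⟪r • x, y⟫ = r * ⟪x, y⟫
  inner_symm : ∀ x y : g, ⟪x, y⟫ = ⟪y, x⟫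
  inner_self_pos : ∀ x : g, x ≠ 0 → 0 < ⟪x, x⟫

variable {g : Type*} [LieRing g] [LieAlgebra ℝ g] [Inner ℝ g]

/-- An orthogonal factor: an ideal admitting a complementary ideal orthogonal to it. -/
def IsOrthogonalFactor (h : LieIdeal ℝ g) : Prop :=
  ∃ h' : LieIdeal ℝ g, (∀ x ∈ h, ∀ y ∈ h', ⟪x, y⟫ = 0) ∧ h ⊔ h' = ⊤ ∧ h ⊓ h' = ⊥

/-- An orthogonal projection of a metric Lie algebra. -/
def IsOrthogonalProjection (p : g →ₗ[ℝ] g) : Prop :=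
  (∀ x y : g, p ⁅x, y⁆ = ⁅p x, p y⁆) ∧ p ∘ₗ p = p ∧
  (∀ x y : g, p ⁅x, y⁆ = ⁅p x, y⁆) ∧ ∀ x y : g, ⟪p x, y⟫ = ⟪x, p y⟫

/-- An orthogonal bi-invariant complex structure. -/
def IsOrthBiinvCplxStruct (J : g →ₗ[ℝ] g) : Prop :=
  (∀ x : g, J (J x) = -x) ∧ (∀ x y : g, J ⁅x, y⁆ = ⁅J x, y⁆) ∧
    ∀ x y : g, ⟪J x, J y⟫ = ⟪x, y⟫

section LieCommuting

variable {R L : Type*} [CommRing R] [LieRing L] [LieAlgebra R L] {f f₁ f₂ : L →ₗ[R] L}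

theorem map_lie_eq_lie_map_right (hf : ∀ x y : L, f ⁅x, y⁆ = ⁅f x, y⁆) (x y : L) :
    f ⁅x, y⁆ = ⁅x, f y⁆ := by
  rw [← lie_skew x y, map_neg, hf y x, lie_skew]

theorem commutator_apply_lie_eq_zero (hf₁ : ∀ x y : L, f₁ ⁅x, y⁆ = ⁅f₁ x, y⁆)
    (hf₂ : ∀ x y : L, f₂ ⁅x, y⁆ = ⁅f₂ x, y⁆) (x y : L) :
    (f₁ ∘ₗ f₂ - f₂ ∘ₗ f₁) ⁅x, y⁆ = 0 := by
  rw [LinearMap.sub_apply, LinearMap.comp_apply, LinearMap.comp_apply, hf₂ x y,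
    map_lie_eq_lie_map_right hf₁, map_lie_eq_lie_map_right hf₁ x y, hf₂, sub_self]

theorem lie_commutator_apply_eq_zero (hf₁ : ∀ x y : L, f₁ ⁅x, y⁆ = ⁅f₁ x, y⁆)
    (hf₂ : ∀ x y : L, f₂ ⁅x, y⁆ = ⁅f₂ x, y⁆) (x y : L) :
    ⁅(f₁ ∘ₗ f₂ - f₂ ∘ₗ f₁) x, y⁆ = 0 := by
  rw [← commutator_apply_lie_eq_zero hf₁ hf₂ x y]
  simp only [LinearMap.sub_apply, LinearMap.comp_apply, sub_lie, hf₁, hf₂]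

theorem map_eq_zero_of_mem_derivedAlgebra {c : L →ₗ[R] L} (hc : ∀ x y : L, c ⁅x, y⁆ = 0)
    {x : L} (hx : x ∈ ⁅(⊤ : LieIdeal R L), (⊤ : LieIdeal R L)⁆) : c x = 0 := by
  rw [← LieSubmodule.mem_toSubmodule, LieSubmodule.lieIdeal_oper_eq_linear_span'] at hx
  induction hx using Submodule.span_induction with
  | mem m hm => obtain ⟨a, -, b, -, rfl⟩ := hm; exact hc a b
  | zero => exact map_zero c
  | add a b _ _ ha hb => rw [map_add, ha, hb, add_zero]
  | smul t a _ ha => rw [map_smul, ha, smul_zero]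

end LieCommuting

theorem exists_inner_map_left_eq_mul {E : Type*} [Inner ℝ E] {f : E → E}
    (h : (∀ x y : E, ⟪f x, y⟫ = ⟪x, f y⟫) ∨ (∀ x y : E, ⟪f x, y⟫ = -⟪x, f y⟫)) :
    ∃ e : ℝ, ∀ x y : E, ⟪f x, y⟫ = e * ⟪x, f y⟫ := by
  rcases h with h | h
  · exact ⟨1, fun x y => by rw [h, one_mul]⟩
  · exact ⟨-1, fun x y => by rw [h, neg_one_mul]⟩

namespace MetricLieAlgebra

variable [MetricLieAlgebra g]

theorem inner_zero_right (x : g) : ⟪x, (0 : g)⟫ = 0 := by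
  rw [inner_symm, ← zero_smul ℝ (0 : g), inner_smul_left, zero_mul]

theorem inner_sub_left (x y z : g) : ⟪x - y, z⟫ = ⟪x, z⟫ - ⟪y, z⟫ := by
  rw [sub_eq_add_neg, inner_add_left, ← neg_one_smul ℝ y, inner_smul_left]
  ring

theorem inner_commutator_left {f₁ f₂ : g →ₗ[ℝ] g} {e₁ e₂ : ℝ}
    (he₁ : ∀ x y : g, ⟪f₁ x, y⟫ = e₁ * ⟪x, f₁ y⟫) (he₂ : ∀ x y : g, ⟪f₂ x, y⟫ = e₂ * ⟪x, f₂ y⟫)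
    (x y : g) :
    ⟪(f₁ ∘ₗ f₂ - f₂ ∘ₗ f₁) x, y⟫ = -(e₁ * e₂) * ⟪x, (f₁ ∘ₗ f₂ - f₂ ∘ₗ f₁) y⟫ := by
  simp only [LinearMap.sub_apply, LinearMap.comp_apply]
  rw [inner_symm x, inner_sub_left, inner_sub_left, he₁ (f₂ x), he₂ x, he₂ (f₁ x), he₁ x,
    inner_symm x (f₂ (f₁ y)), inner_symm x (f₁ (f₂ y))]
  ring

theorem eq_zero_of_comp_self_eq_zero {c : g →ₗ[ℝ] g} {e : ℝ}
    (hadj : ∀ x y : g, ⟪c x, y⟫ = e * ⟪x, c y⟫) (hcc : ∀ x : g, c (c x) = 0) : c = 0 := by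
  ext x
  by_contra hne
  have hzero : ⟪c x, c x⟫ = 0 := by rw [hadj, hcc, inner_zero_right, mul_zero]
  exact (inner_self_pos (c x) hne).ne' hzero

end MetricLieAlgebra

theorem stmt4_general (g : Type*) [LieRing g] [LieAlgebra ℝ g] [Inner ℝ g]
    [MetricLieAlgebra g]
    (hZ : ∀ x : g, (∀ y : g, ⁅x, y⁆ = 0) →
      x ∈ ⁅(⊤ : LieIdeal ℝ g), (⊤ : LieIdeal ℝ g)⁆)
    (f₁ f₂ : g →ₗ[ℝ] g)
    (hf₁ : ∀ x y : g, f₁ ⁅x, y⁆ = ⁅f₁ x, y⁆)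
    (hf₂ : ∀ x y : g, f₂ ⁅x, y⁆ = ⁅f₂ x, y⁆)
    (hs₁ : (∀ x y : g, ⟪f₁ x, y⟫ = ⟪x, f₁ y⟫) ∨ (∀ x y : g, ⟪f₁ x, y⟫ = -⟪x, f₁ y⟫))
    (hs₂ : (∀ x y : g, ⟪f₂ x, y⟫ = ⟪x, f₂ y⟫) ∨ (∀ x y : g, ⟪f₂ x, y⟫ = -⟪x, f₂ y⟫)) :
    f₁ ∘ₗ f₂ = f₂ ∘ₗ f₁ := by
  have hcc : ∀ x : g, (f₁ ∘ₗ f₂ - f₂ ∘ₗ f₁) ((f₁ ∘ₗ f₂ - f₂ ∘ₗ f₁) x) = 0 := fun x =>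
    map_eq_zero_of_mem_derivedAlgebra (commutator_apply_lie_eq_zero hf₁ hf₂)
      (hZ _ (lie_commutator_apply_eq_zero hf₁ hf₂ x))
  obtain ⟨e₁, he₁⟩ := exists_inner_map_left_eq_mul hs₁
  obtain ⟨e₂, he₂⟩ := exists_inner_map_left_eq_mul hs₂
  exact sub_eq_zero.mp <| MetricLieAlgebra.eq_zero_of_comp_self_eq_zero
    (MetricLieAlgebra.inner_commutator_left he₁ he₂) hcc

/-- Two (skew-)symmetric linear maps satisfying `[f(X),Y] = f([X,Y])` on a metric Lie
algebra with no non-zero abelian factor (i.e. `Z(g) ⊆ [g,g]`) commute. -/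
theorem stmt4 (g : Type*) [LieRing g] [LieAlgebra ℝ g] [Inner ℝ g]
    [MetricLieAlgebra g] [Module.Finite ℝ g]
    (hZ : ∀ x : g, (∀ y : g, ⁅x, y⁆ = 0) →
      x ∈ ⁅(⊤ : LieIdeal ℝ g), (⊤ : LieIdeal ℝ g)⁆)
    (f₁ f₂ : g →ₗ[ℝ] g)
    (hf₁ : ∀ x y : g, f₁ ⁅x, y⁆ = ⁅f₁ x, y⁆)
    (hf₂ : ∀ x y : g, f₂ ⁅x, y⁆ = ⁅f₂ x, y⁆)
    (hs₁ : (∀ x y : g, ⟪f₁ x, y⟫ = ⟪x, f₁ y⟫) ∨ (∀ x y : g, ⟪f₁ x, y⟫ = -⟪x, f₁ y⟫))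
    (hs₂ : (∀ x y : g, ⟪f₂ x, y⟫ = ⟪x, f₂ y⟫) ∨ (∀ x y : g, ⟪f₂ x, y⟫ = -⟪x, f₂ y⟫)) :
    f₁ ∘ₗ f₂ = f₂ ∘ₗ f₁ :=
  stmt4_general g hZ f₁ f₂ hf₁ hf₂ hs₁ hs₂
end

section
/- Let g be a metric Lie algebra with no non-zero abelian orthogonal factor, and let p₁, p₂: g → g be two orthogonal projections. Then p₁ and p₂ commute and p₁∘p₂ = p₂∘p₁ is an orthogonal projection whose image is p₁(g) ∩ p₂(g). -/
open scoped RealInnerProductSpace TensorProduct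

variable {g : Type*} [LieRing g] [LieAlgebra ℝ g] [Inner ℝ g]

section Aux

variable [MetricLieAlgebra g]

private lemma aux_inner_zero_left (x : g) : ⟪(0 : g), x⟫ = 0 := by
  have h := MetricLieAlgebra.inner_smul_left (0 : ℝ) (0 : g) x
  simpa using h

private lemma aux_inner_sub_left (x y z : g) : ⟪x - y, z⟫ = ⟪x, z⟫ - ⟪y, z⟫ := by
  have h1 := MetricLieAlgebra.inner_add_left (x - y) y z
  rw [sub_add_cancel] at h1
  linarith

private lemma aux_inner_sub_right (x y z : g) : ⟪x, y - z⟫ = ⟪x, y⟫ - ⟪x, z⟫ := by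
  rw [MetricLieAlgebra.inner_symm, aux_inner_sub_left, MetricLieAlgebra.inner_symm y x,
    MetricLieAlgebra.inner_symm z x]

/-- An element in the image of a square-zero "nice" map is central. -/
private lemma aux_central (r : g →ₗ[ℝ] g)
    (hmor : ∀ x y : g, r ⁅x, y⁆ = ⁅r x, r y⁆)
    (hrel : ∀ x y : g, r ⁅x, y⁆ = ⁅r x, y⁆)
    (hsq : ∀ x : g, r (r x) = 0) (x y : g) : ⁅r x, y⁆ = 0 := by
  have h1 : ⁅r x, y⁆ = ⁅r x, r y⁆ := by rw [← hrel, hmor]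
  have h2 : ⁅r x, r y⁆ = ⁅r x, r (r y)⁆ := by rw [← hrel, hmor]
  rw [h1, h2, hsq, lie_zero]

private lemma aux_zero
    (hZ : ∀ x : g, (∀ y : g, ⁅x, y⁆ = 0) →
      x ∈ ⁅(⊤ : LieIdeal ℝ g), (⊤ : LieIdeal ℝ g)⁆)
    (r r' : g →ₗ[ℝ] g)
    (hadj : ∀ x y : g, ⟪r x, y⟫ = ⟪x, r' y⟫)
    (hc : ∀ x y : g, ⁅r x, y⁆ = 0)
    (hc' : ∀ x y : g, ⁅r' x, y⁆ = 0)
    (hrel' : ∀ x y : g, r' ⁅x, y⁆ = ⁅r' x, y⁆) (x : g) : r x = 0 := by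
  by_contra hne
  have hmem : r x ∈ ⁅(⊤ : LieIdeal ℝ g), (⊤ : LieIdeal ℝ g)⁆ := hZ _ (hc x)
  have hmem' : r x ∈ Submodule.span ℝ
      { m : g | ∃ a ∈ (⊤ : LieIdeal ℝ g), ∃ b ∈ (⊤ : LieIdeal ℝ g), ⁅a, b⁆ = m } := by
    rw [← LieSubmodule.lieIdeal_oper_eq_linear_span']
    exact hmem
  have key : ∀ m ∈ Submodule.span ℝ
      { m : g | ∃ a ∈ (⊤ : LieIdeal ℝ g), ∃ b ∈ (⊤ : LieIdeal ℝ g), ⁅a, b⁆ = m },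
      ⟪m, r x⟫ = 0 := by
    intro m hm
    induction hm using Submodule.span_induction with
    | mem m hms =>
      obtain ⟨a, -, b, -, rfl⟩ := hms
      rw [MetricLieAlgebra.inner_symm, hadj, hrel', hc', MetricLieAlgebra.inner_symm,
        aux_inner_zero_left]
    | zero => exact aux_inner_zero_left _
    | add a b ha hb iha ihb =>
      rw [MetricLieAlgebra.inner_add_left, iha, ihb, add_zero]
    | smul t a ha iha =>
      rw [MetricLieAlgebra.inner_smul_left, iha, mul_zero]
  have := key (r x) hmem'
  have hpos := MetricLieAlgebra.inner_self_pos (r x) hne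
  linarith

end Aux

/-- Two orthogonal projections on a metric Lie algebra with no non-zero abelian factor
commute, and their composition is an orthogonal projection onto the intersection of
their images. -/
theorem stmt5 (g : Type*) [LieRing g] [LieAlgebra ℝ g] [Inner ℝ g]
    [MetricLieAlgebra g] [Module.Finite ℝ g]
    (hZ : ∀ x : g, (∀ y : g, ⁅x, y⁆ = 0) →
      x ∈ ⁅(⊤ : LieIdeal ℝ g), (⊤ : LieIdeal ℝ g)⁆)
    (p₁ p₂ : g →ₗ[ℝ] g)
    (hp₁ : IsOrthogonalProjection p₁) (hp₂ : IsOrthogonalProjection p₂) :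
    p₁ ∘ₗ p₂ = p₂ ∘ₗ p₁ ∧ IsOrthogonalProjection (p₁ ∘ₗ p₂) ∧
      LinearMap.range (p₁ ∘ₗ p₂) = LinearMap.range p₁ ⊓ LinearMap.range p₂ := by
  obtain ⟨h1m, h1i, h1r, h1s⟩ := hp₁
  obtain ⟨h2m, h2i, h2r, h2s⟩ := hp₂
  have h1idem : ∀ x : g, p₁ (p₁ x) = p₁ x := fun x => by
    have := LinearMap.ext_iff.mp h1i x; simpa using this
  have h2idem : ∀ x : g, p₂ (p₂ x) = p₂ x := fun x => by
    have := LinearMap.ext_iff.mp h2i x; simpa using this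
  -- the complementary projection q = id - p₁
  set q : g →ₗ[ℝ] g := LinearMap.id - p₁ with hq
  have hqapp : ∀ x : g, q x = x - p₁ x := fun x => rfl
  have hqrel : ∀ x y : g, q ⁅x, y⁆ = ⁅q x, y⁆ := by
    intro x y
    rw [hqapp, hqapp, sub_lie, h1r]
  have h1r' : ∀ a b : g, p₁ ⁅a, b⁆ = ⁅a, p₁ b⁆ := by
    intro a b
    rw [← lie_skew a b, map_neg, h1r, lie_skew]
  have hqmor : ∀ x y : g, q ⁅x, y⁆ = ⁅q x, q y⁆ := by
    intro x y
    have e1 : ⁅x, p₁ y⁆ = p₁ ⁅x, y⁆ := (h1r' x y).symm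
    have e2 : ⁅p₁ x, y⁆ = p₁ ⁅x, y⁆ := (h1r x y).symm
    have e3 : ⁅p₁ x, p₁ y⁆ = p₁ ⁅x, y⁆ := (h1m x y).symm
    rw [hqapp, hqapp, hqapp, sub_lie, lie_sub, lie_sub, e1, e2, e3]
    abel
  have hqsym : ∀ x y : g, ⟪q x, y⟫ = ⟪x, q y⟫ := by
    intro x y
    rw [hqapp, hqapp, aux_inner_sub_left, h1s, aux_inner_sub_right]
  -- the two "commutator defect" maps
  set r : g →ₗ[ℝ] g := p₁ ∘ₗ p₂ ∘ₗ q with hr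
  set r' : g →ₗ[ℝ] g := q ∘ₗ p₂ ∘ₗ p₁ with hr'
  have hrapp : ∀ x : g, r x = p₁ (p₂ (q x)) := fun x => rfl
  have hr'app : ∀ x : g, r' x = q (p₂ (p₁ x)) := fun x => rfl
  have hrmor : ∀ x y : g, r ⁅x, y⁆ = ⁅r x, r y⁆ := by
    intro x y; rw [hrapp, hrapp, hrapp, hqmor, h2m, h1m]
  have hrrel : ∀ x y : g, r ⁅x, y⁆ = ⁅r x, y⁆ := by
    intro x y; rw [hrapp, hrapp, hqrel, h2r, h1r]
  have hr'mor : ∀ x y : g, r' ⁅x, y⁆ = ⁅r' x, r' y⁆ := by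
    intro x y; rw [hr'app, hr'app, hr'app, h1m, h2m, hqmor]
  have hr'rel : ∀ x y : g, r' ⁅x, y⁆ = ⁅r' x, y⁆ := by
    intro x y; rw [hr'app, hr'app, h1r, h2r, hqrel]
  have hqp1 : ∀ x : g, q (p₁ x) = 0 := by
    intro x; rw [hqapp, h1idem, sub_self]
  have hrsq : ∀ x : g, r (r x) = 0 := by
    intro x; rw [hrapp (r x), hrapp, hqp1, map_zero, map_zero]
  have hp1q : ∀ z : g, p₁ (q z) = 0 := by
    intro z
    rw [hqapp, map_sub, h1idem, sub_self]
  have hr'sq : ∀ x : g, r' (r' x) = 0 := by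
    intro x
    rw [hr'app (r' x), hr'app, hp1q, map_zero, map_zero]
  have hadj : ∀ x y : g, ⟪r x, y⟫ = ⟪x, r' y⟫ := by
    intro x y; rw [hrapp, hr'app, h1s, h2s, hqsym]
  have hadj' : ∀ x y : g, ⟪r' x, y⟫ = ⟪x, r y⟫ := by
    intro x y; rw [hrapp, hr'app, hqsym, h2s, h1s]
  have hc : ∀ x y : g, ⁅r x, y⁆ = 0 := aux_central r hrmor hrrel hrsq
  have hc' : ∀ x y : g, ⁅r' x, y⁆ = 0 := aux_central r' hr'mor hr'rel hr'sq
  have hrzero : ∀ x : g, r x = 0 := aux_zero hZ r r' hadj hc hc' hr'rel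
  have hr'zero : ∀ x : g, r' x = 0 := aux_zero hZ r' r hadj' hc' hc hrrel
  -- commuting
  have hcomm : ∀ x : g, p₁ (p₂ x) = p₂ (p₁ x) := by
    intro x
    have e1 : p₁ (p₂ x) - p₁ (p₂ (p₁ x)) = 0 := by
      have := hrzero x
      rw [hrapp, hqapp, map_sub, map_sub] at this
      exact this
    have e2 : p₂ (p₁ x) - p₁ (p₂ (p₁ x)) = 0 := by
      have := hr'zero x
      rw [hr'app, hqapp] at this
      exact this
    have := sub_eq_zero.mp e1
    rw [this, ← sub_eq_zero.mp e2]
  have hcomm' : p₁ ∘ₗ p₂ = p₂ ∘ₗ p₁ := by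
    ext x; exact hcomm x
  refine ⟨hcomm', ⟨?_, ?_, ?_, ?_⟩, ?_⟩
  · intro x y
    simp only [LinearMap.comp_apply]
    rw [h2m, h1m]
  · ext x
    simp only [LinearMap.comp_apply]
    rw [← hcomm, h2idem, h1idem]
  · intro x y
    simp only [LinearMap.comp_apply]
    rw [h2r, h1r]
  · intro x y
    simp only [LinearMap.comp_apply]
    rw [h1s, h2s, hcomm]
  · ext x
    simp only [Submodule.mem_inf, LinearMap.mem_range, LinearMap.comp_apply]
    constructor
    · rintro ⟨y, rfl⟩
      exact ⟨⟨p₂ y, rfl⟩, ⟨p₁ y, (hcomm y).symm⟩⟩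
    · rintro ⟨⟨a, ha⟩, ⟨b, hb⟩⟩
      have hx2 : p₂ x = x := by rw [← hb, h2idem]
      have hx1 : p₁ x = x := by rw [← ha, h1idem]
      exact ⟨x, by rw [hx2, hx1]⟩
end

section
/- Let g be a real metric Lie algebra with no non-zero abelian orthogonal factor admitting an orthogonal bi-invariant complex structure J, and suppose the complex metric Lie algebra (g,J) has an orthogonal decomposition into irreducible complex factors (g,J) = ⊕ⱼ₌₁^k (gⱼ, Jⱼ), where Jⱼ is the restriction of J to gⱼ. Then every orthogonal bi-invariant complex structure on g is of the form ±J₁ ⊕ ±J₂ ⊕ … ⊕ ±J_k; in particular g admits exactly 2^k orthogonal bi-invariant complex structures. -/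
open scoped RealInnerProductSpace TensorProduct

variable {g : Type*} [LieRing g] [LieAlgebra ℝ g] [Inner ℝ g]

/-- A complex factor of `(g,J)`: an orthogonal factor which is `J`-invariant. -/
def IsComplexFactor (J : g →ₗ[ℝ] g) (h : LieIdeal ℝ g) : Prop :=
  IsOrthogonalFactor h ∧ ∀ x ∈ h, J x ∈ h

/-- An irreducible complex factor of `(g,J)`. -/
def IsComplexIrreducibleFactor (J : g →ₗ[ℝ] g) (h : LieIdeal ℝ g) : Prop :=
  IsComplexFactor J h ∧ h ≠ ⊥ ∧
    ∀ k : LieIdeal ℝ g, k ≤ h → IsComplexFactor J k → k = ⊥ ∨ k = h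

/-! A skew-adjoint element of the centroid of `g` (the endomorphisms commuting with every `ad x`)
that kills `[g, g]` maps `g` into the centre, hence into `[g, g]`; so it squares to zero and,
being skew-adjoint, vanishes. Hence two orthogonal bi-invariant complex structures `J, J'`
commute, and `A = -J J'` is a self-adjoint involution in the centroid commuting with `J`. For the
same reason `A` commutes with the orthogonal projection onto each factor `gⱼ`, so it preserves
`gⱼ`; the `+1`-eigenspace of `A` in `gⱼ` is then a `J`-invariant orthogonal factor, so by
irreducibility `A = ±1` there, i.e. `J' = J A = ±J` on `gⱼ`. Conversely, for every choice of
signs `S = ∑ ±pⱼ` is a self-adjoint involution in the centroid commuting with `J`, and `J S` is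
again an orthogonal bi-invariant complex structure. -/

open LinearMap (BilinForm IsAdjointPair)

namespace LieAlgebra

variable (R L : Type*) [CommRing R] [LieRing L] [LieAlgebra R L]

def centroid : Subalgebra R (Module.End R L) :=
  Subalgebra.centralizer R (Set.range (ad R L))

variable {R L} {T : Module.End R L}

theorem mem_centroid_iff : T ∈ centroid R L ↔ ∀ x y : L, T ⁅x, y⁆ = ⁅x, T y⁆ := by
  simp only [centroid, Subalgebra.mem_centralizer_iff, Set.forall_mem_range, LinearMap.ext_iff,
    Module.End.mul_apply, ad_apply]
  exact forall_congr' fun x => forall_congr' fun y => eq_comm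

theorem mem_centroid_iff' : T ∈ centroid R L ↔ ∀ x y : L, T ⁅x, y⁆ = ⁅T x, y⁆ := by
  rw [mem_centroid_iff]
  refine forall_comm.trans (forall_congr' fun y => forall_congr' fun x => ?_)
  rw [← lie_skew, map_neg, ← lie_skew x, neg_inj]

theorem map_lie_of_mem_centroid (hT : T ∈ centroid R L) (x y : L) : T ⁅x, y⁆ = ⁅x, T y⁆ :=
  mem_centroid_iff.mp hT x y

theorem map_lie_of_mem_centroid' (hT : T ∈ centroid R L) (x y : L) :
    T ⁅x, y⁆ = ⁅T x, y⁆ :=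
  mem_centroid_iff'.mp hT x y

def centroid.eigenIdeal (T : centroid R L) (c : R) : LieIdeal R L :=
  { Module.End.eigenspace (T : Module.End R L) c with
    lie_mem := fun {x y} hy => by
      simp only [AddSubsemigroup.mem_carrier, AddSubmonoid.mem_toSubsemigroup,
        Submodule.mem_toAddSubmonoid, Module.End.mem_eigenspace_iff] at hy ⊢
      rw [map_lie_of_mem_centroid T.2, hy, lie_smul] }

theorem centroid.mem_eigenIdeal {T : centroid R L} {c : R} {x : L} :
    x ∈ eigenIdeal T c ↔ (T : Module.End R L) x = c • x :=
  Module.End.mem_eigenspace_iff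

end LieAlgebra

theorem linearMap_ext_of_iSup_eq_top {R L M ι : Type*} [CommRing R] [LieRing L] [LieAlgebra R L]
    [AddCommGroup M] [Module R M] {G : ι → LieIdeal R L} (hsup : ⨆ j, G j = ⊤)
    {f f' : L →ₗ[R] M} (h : ∀ j, ∀ x ∈ G j, f x = f' x) : f = f' := by
  refine LinearMap.ext_on (s := ⋃ j, ((G j).toSubmodule : Set L)) ?_ fun x hx => ?_
  · rw [← Submodule.iSup_eq_span, ← LieSubmodule.iSup_toSubmodule, hsup,
      LieSubmodule.top_toSubmodule]
  · obtain ⟨j, hj⟩ := Set.mem_iUnion.mp hx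
    exact h j x hj

namespace MetricLieAlgebra

variable [MetricLieAlgebra g]

def innerForm : BilinForm ℝ g :=
  LinearMap.mk₂ ℝ (fun x y => ⟪x, y⟫) inner_add_left inner_smul_left
    (fun x y z => by simp only [inner_symm x, inner_add_left])
    (fun r x y => by simp only [inner_symm x, inner_smul_left, smul_eq_mul])

@[simp]
theorem innerForm_apply (x y : g) : innerForm x y = ⟪x, y⟫ := rfl

theorem eq_zero_of_inner_self_eq_zero {x : g} (hx : ⟪x, x⟫ = 0) : x = 0 := by
  by_contra h
  exact (inner_self_pos x h).ne' hx

end MetricLieAlgebra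

open LieAlgebra MetricLieAlgebra

section Centroid

variable [MetricLieAlgebra g] {S T : Module.End ℝ g}

theorem eq_zero_of_mem_centroid (hZ : center ℝ g ≤ ⁅(⊤ : LieIdeal ℝ g), ⊤⁆)
    (hT : T ∈ centroid ℝ g) (hskew : innerForm.IsSkewAdjoint T)
    (hkill : ∀ x y : g, T ⁅x, y⁆ = 0) :
    T = 0 := by
  have hder : ⁅(⊤ : LieIdeal ℝ g), ⊤⁆ ≤ centroid.eigenIdeal ⟨T, hT⟩ 0 := by
    rw [LieSubmodule.lie_le_iff]
    exact fun x _ y _ => centroid.mem_eigenIdeal.mpr (by rw [zero_smul]; exact hkill x y)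
  ext x
  have hcen : T x ∈ center ℝ g := by
    rw [LieModule.mem_maxTrivSubmodule]
    intro y
    rw [← map_lie_of_mem_centroid hT, hkill]
  have hTT : T (T x) = 0 := by
    simpa only [zero_smul] using centroid.mem_eigenIdeal.mp (hder (hZ hcen))
  refine eq_zero_of_inner_self_eq_zero ?_
  have := hskew x (T x)
  rwa [Pi.neg_apply, hTT, neg_zero, map_zero] at this

theorem commute_of_mem_centroid (hZ : center ℝ g ≤ ⁅(⊤ : LieIdeal ℝ g), ⊤⁆)
    (hS : S ∈ centroid ℝ g) (hT : T ∈ centroid ℝ g)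
    (hadj : IsAdjointPair innerForm innerForm (S * T) (T * S)) : Commute S T := by
  have hadj' : IsAdjointPair innerForm innerForm (T * S) (S * T) := fun x y => by
    simpa only [innerForm_apply, inner_symm] using (hadj y x).symm
  refine sub_eq_zero.mp (eq_zero_of_mem_centroid hZ
    (sub_mem (mul_mem hS hT) (mul_mem hT hS)) ?_ fun x y => ?_)
  · rw [LinearMap.IsSkewAdjoint, ← LinearMap.coe_neg, neg_sub]
    exact hadj.sub hadj'
  · simp only [LinearMap.sub_apply, Module.End.mul_apply, map_lie_of_mem_centroid hT,
      map_lie_of_mem_centroid' hS, sub_self]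

end Centroid

namespace IsOrthBiinvCplxStruct

variable {J J' S : Module.End ℝ g}

theorem mul_self (hJ : IsOrthBiinvCplxStruct J) : J * J = -1 :=
  LinearMap.ext hJ.1

theorem mem_centroid (hJ : IsOrthBiinvCplxStruct J) : J ∈ centroid ℝ g :=
  mem_centroid_iff'.mpr hJ.2.1

theorem isAdjointPair [MetricLieAlgebra g] (hJ : IsOrthBiinvCplxStruct J) :
    IsAdjointPair innerForm innerForm J ⇑(-J) := fun x y => by
  have h := hJ.2.2 x (J y)
  rw [hJ.1, ← innerForm_apply, ← innerForm_apply, map_neg] at h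
  rw [LinearMap.neg_apply, map_neg, ← h, neg_neg]

theorem isAdjointPair_neg [MetricLieAlgebra g] (hJ : IsOrthBiinvCplxStruct J) :
    IsAdjointPair innerForm innerForm ⇑(-J) J := fun x y => by
  rw [LinearMap.neg_apply, map_neg, LinearMap.neg_apply, hJ.isAdjointPair, LinearMap.neg_apply,
    map_neg, neg_neg]

theorem commute [MetricLieAlgebra g] (hZ : center ℝ g ≤ ⁅(⊤ : LieIdeal ℝ g), ⊤⁆)
    (hJ : IsOrthBiinvCplxStruct J) (hJ' : IsOrthBiinvCplxStruct J') : Commute J J' := by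
  refine commute_of_mem_centroid hZ hJ.mem_centroid hJ'.mem_centroid ?_
  simpa only [neg_mul_neg] using hJ.isAdjointPair.mul hJ'.isAdjointPair

theorem mul_of_isAdjointPair [MetricLieAlgebra g] (hJ : IsOrthBiinvCplxStruct J)
    (hS : S ∈ centroid ℝ g) (hSS : IsAdjointPair innerForm innerForm S S) (hS2 : S * S = 1)
    (hJS : Commute J S) : IsOrthBiinvCplxStruct (J * S) := by
  refine ⟨fun x => ?_, mem_centroid_iff'.mp (mul_mem hJ.mem_centroid hS), fun x y => ?_⟩
  · have : J * S * (J * S) = -1 := by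
      rw [hJS.symm.mul_mul_mul_comm, hJ.mul_self, hS2, neg_one_mul]
    exact LinearMap.congr_fun this x
  · rw [Module.End.mul_apply, Module.End.mul_apply, hJ.2.2, ← innerForm_apply, hSS,
      ← Module.End.mul_apply, hS2, Module.End.one_apply, innerForm_apply]

end IsOrthBiinvCplxStruct

section OrthogonalFactor

variable {p : Module.End ℝ g} {h : LieIdeal ℝ g}

theorem IsOrthogonalProjection.mem_centroid (hp : IsOrthogonalProjection p) :
    p ∈ centroid ℝ g :=
  mem_centroid_iff'.mpr hp.2.2.1

theorem IsOrthogonalProjection.apply_eq_zero [MetricLieAlgebra g] (hp : IsOrthogonalProjection p)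
    (hph : ∀ y, p y ∈ h) {x : g} (hx : ∀ y ∈ h, ⟪x, y⟫ = 0) : p x = 0 := by
  refine eq_zero_of_inner_self_eq_zero ?_
  rw [hp.2.2.2, ← LinearMap.comp_apply, hp.2.1]
  exact hx _ (hph x)

theorem IsOrthogonalFactor.exists_isOrthogonalProjection [MetricLieAlgebra g]
    (hh : IsOrthogonalFactor h) :
    ∃ p, IsOrthogonalProjection p ∧ (∀ x, p x ∈ h) ∧ ∀ x ∈ h, p x = x := by
  obtain ⟨h', horth, hsup, hinf⟩ := hh
  have hc : IsCompl h.toSubmodule h'.toSubmodule :=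
    LieSubmodule.isCompl_toSubmodule.mpr ⟨disjoint_iff.mpr hinf, codisjoint_iff.mpr hsup⟩
  set p := h.toSubmodule.projection h'.toSubmodule hc
  have hpmem (x : g) : p x ∈ h := Submodule.projection_apply_mem hc x
  have hrest (x : g) : x - p x ∈ h' := Submodule.sub_projection_mem hc x
  have hcross {a b : g} (ha : a ∈ h) (hb : b ∈ h') : ⁅a, b⁆ = 0 := by
    have hab : ⁅a, b⁆ ∈ h := by rw [← lie_skew]; exact neg_mem (h.lie_mem ha)
    rw [← LieSubmodule.mem_bot (R := ℝ) (L := g), ← hinf]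
    exact ⟨hab, h'.lie_mem hb⟩
  have hleft {a : g} (ha : a ∈ h) : p a = a := Submodule.projection_apply_of_mem_left hc ha
  have hright {b : g} (hb : b ∈ h') : p b = 0 := Submodule.projection_apply_of_mem_right hc hb
  have hlie (x y : g) : p ⁅x, y⁆ = ⁅p x, y⁆ :=
    calc p ⁅x, y⁆ = p (⁅p x, y⁆ + ⁅x - p x, y⁆) := by rw [← add_lie, add_sub_cancel]
      _ = ⁅p x, y⁆ := by
        rw [map_add, hleft (lie_mem_left ℝ g h _ _ (hpmem x)),
          hright (lie_mem_left ℝ g h' _ _ (hrest x)), add_zero]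
  have hinner_left (x y : g) : ⟪p x, y⟫ = ⟪p x, p y⟫ := by
    conv_lhs => rw [← add_sub_cancel (p y) y]
    rw [← innerForm_apply, map_add, innerForm_apply, innerForm_apply,
      horth _ (hpmem x) _ (hrest y), add_zero]
  have hinner_right (x y : g) : ⟪x, p y⟫ = ⟪p x, p y⟫ := by
    conv_lhs => rw [← add_sub_cancel (p x) x]
    rw [MetricLieAlgebra.inner_add_left, MetricLieAlgebra.inner_symm (x - p x),
      horth _ (hpmem y) _ (hrest x), add_zero]
  refine ⟨p, ⟨fun x y => ?_, LinearMap.ext fun x => hleft (hpmem x), hlie,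
    fun x y => (hinner_left x y).trans (hinner_right x y).symm⟩, hpmem, fun x => hleft⟩
  conv_lhs => rw [hlie, ← add_sub_cancel (p y) y]
  rw [lie_add, hcross (hpmem x) (hrest y), add_zero]

end OrthogonalFactor

section IrreducibleFactor

variable [MetricLieAlgebra g] {J J' A : Module.End ℝ g} {h : LieIdeal ℝ g}

theorem IsOrthogonalFactor.apply_mem_of_mem_centroid
    (hZ : center ℝ g ≤ ⁅(⊤ : LieIdeal ℝ g), ⊤⁆) (hh : IsOrthogonalFactor h)
    (hA : A ∈ centroid ℝ g)
    (hAA : IsAdjointPair innerForm innerForm A A) {x : g} (hx : x ∈ h) : A x ∈ h := by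
  obtain ⟨p, hp, hpmem, hpid⟩ := hh.exists_isOrthogonalProjection
  have hAp : Commute A p := commute_of_mem_centroid hZ hA hp.mem_centroid (hAA.mul hp.2.2.2)
  rw [← hpid x hx, ← Module.End.mul_apply, hAp.eq, Module.End.mul_apply]
  exact hpmem _

theorem IsComplexFactor.inf_eigenIdeal_one (hh : IsComplexFactor J h) (hA : A ∈ centroid ℝ g)
    (hAA : IsAdjointPair innerForm innerForm A A) (hA2 : A * A = 1) (hAJ : Commute A J)
    (hAh : ∀ x ∈ h, A x ∈ h) :
    IsComplexFactor J (h ⊓ centroid.eigenIdeal ⟨A, hA⟩ 1) := by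
  obtain ⟨⟨h', horth, hsup, -⟩, hJh⟩ := hh
  set P := h ⊓ centroid.eigenIdeal ⟨A, hA⟩ 1
  set Q := h' ⊔ (h ⊓ centroid.eigenIdeal ⟨A, hA⟩ (-1))
  have hP {x : g} : x ∈ P ↔ x ∈ h ∧ A x = x := by
    rw [LieSubmodule.mem_inf, centroid.mem_eigenIdeal, one_smul]
  have hAA2 (x : g) : A (A x) = x := LinearMap.congr_fun hA2 x
  have hPQ : ∀ x ∈ P, ∀ y ∈ Q, ⟪x, y⟫ = 0 := by
    intro x hx y hy
    obtain ⟨hxh, hAx⟩ := hP.mp hx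
    obtain ⟨b, hb, c, ⟨-, hc⟩, rfl⟩ := (LieSubmodule.mem_sup _ _ _).mp hy
    have hAc : A c = -c := by rw [centroid.mem_eigenIdeal.mp hc, neg_one_smul]
    have hxc : innerForm x c = 0 := by
      have : innerForm x c = -innerForm x c := by
        rw [← map_neg, ← hAc, ← hAA, hAx]
      linarith
    rw [← innerForm_apply, map_add, hxc, innerForm_apply, horth x hxh b hb, add_zero]
  refine ⟨⟨Q, hPQ, eq_top_iff.mpr fun z _ => ?_, ?_⟩, fun x hx => ?_⟩
  · obtain ⟨a, ha, b, hb, rfl⟩ :=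
      (LieSubmodule.mem_sup _ _ _).mp (hsup ▸ LieSubmodule.mem_top z)
    have hplus : (2⁻¹ : ℝ) • (a + A a) ∈ P :=
      hP.mpr ⟨h.smul_mem _ (add_mem ha (hAh a ha)), by
        rw [map_smul, map_add, hAA2, add_comm]⟩
    have hminus : (2⁻¹ : ℝ) • (a - A a) ∈ h ⊓ centroid.eigenIdeal ⟨A, hA⟩ (-1) :=
      ⟨h.smul_mem _ (sub_mem ha (hAh a ha)), centroid.mem_eigenIdeal.mpr (by
        simp only [map_smul, map_sub, hAA2]
        module)⟩
    exact (LieSubmodule.mem_sup _ _ _).mpr ⟨_, hplus, b + (2⁻¹ : ℝ) • (a - A a),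
      Q.add_mem (LieSubmodule.mem_sup_left hb) (LieSubmodule.mem_sup_right hminus), by module⟩
  · exact (LieSubmodule.eq_bot_iff _).mpr fun x hx =>
      eq_zero_of_inner_self_eq_zero (hPQ x hx.1 x hx.2)
  · obtain ⟨hxh, hAx⟩ := hP.mp hx
    refine hP.mpr ⟨hJh x hxh, ?_⟩
    rw [← Module.End.mul_apply, hAJ.eq, Module.End.mul_apply, hAx]

theorem IsComplexIrreducibleFactor.eqOn_or_eqOn_neg_of_mul_self_eq_one
    (hh : IsComplexIrreducibleFactor J h) (hA : A ∈ centroid ℝ g)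
    (hAA : IsAdjointPair innerForm innerForm A A) (hA2 : A * A = 1) (hAJ : Commute A J)
    (hAh : ∀ x ∈ h, A x ∈ h) : (∀ x ∈ h, A x = x) ∨ ∀ x ∈ h, A x = -x := by
  have hP {x : g} : x ∈ h ⊓ centroid.eigenIdeal ⟨A, hA⟩ 1 ↔ x ∈ h ∧ A x = x := by
    rw [LieSubmodule.mem_inf, centroid.mem_eigenIdeal, one_smul]
  rcases hh.2.2 _ inf_le_left (hh.1.inf_eigenIdeal_one hA hAA hA2 hAJ hAh) with hbot | htop
  · refine Or.inr fun x hx => eq_neg_of_add_eq_zero_right ?_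
    have hplus : x + A x ∈ h ⊓ centroid.eigenIdeal ⟨A, hA⟩ 1 :=
      hP.mpr ⟨add_mem hx (hAh x hx), by
        rw [map_add, ← Module.End.mul_apply, hA2, Module.End.one_apply, add_comm]⟩
    rwa [hbot, LieSubmodule.mem_bot] at hplus
  · exact Or.inl fun x hx => (hP.mp (htop.ge hx)).2

theorem IsComplexIrreducibleFactor.eqOn_or_eqOn_neg
    (hZ : center ℝ g ≤ ⁅(⊤ : LieIdeal ℝ g), ⊤⁆)
    (hJ : IsOrthBiinvCplxStruct J) (hJ' : IsOrthBiinvCplxStruct J')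
    (hh : IsComplexIrreducibleFactor J h) :
    (∀ x ∈ h, J' x = J x) ∨ ∀ x ∈ h, J' x = -J x := by
  have hcomm := hJ.commute hZ hJ'
  set A := -J * J'
  have hA : A ∈ centroid ℝ g := mul_mem (neg_mem hJ.mem_centroid) hJ'.mem_centroid
  have hAA : IsAdjointPair innerForm innerForm A A := by
    have := hJ.isAdjointPair_neg.mul hJ'.isAdjointPair
    rwa [neg_mul, neg_mul, ← hcomm.eq, ← neg_mul] at this
  have hA2 : A * A = 1 := by
    rw [hcomm.symm.neg_right.mul_mul_mul_comm, neg_mul_neg, hJ.mul_self, hJ'.mul_self, neg_mul_neg,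
      one_mul]
  have hAJ : Commute A J := (Commute.refl J).neg_left.mul_left hcomm.symm
  have hJA : J * A = J' := by rw [← mul_assoc, mul_neg, hJ.mul_self, neg_neg, one_mul]
  rcases hh.eqOn_or_eqOn_neg_of_mul_self_eq_one hA hAA hA2 hAJ
    (fun x hx => hh.1.1.apply_mem_of_mem_centroid hZ hA hAA hx) with hpos | hneg
  · exact Or.inl fun x hx => by rw [← hJA, Module.End.mul_apply, hpos x hx]
  · exact Or.inr fun x hx => by rw [← hJA, Module.End.mul_apply, hneg x hx, map_neg]

end IrreducibleFactor

section Decomposition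

variable [MetricLieAlgebra g] {ι : Type*} {J J' : Module.End ℝ g} {G : ι → LieIdeal ℝ g}

theorem exists_mem_centroid_eqOn_smul [Fintype ι] (hG : ∀ j, IsOrthogonalFactor (G j))
    (horth : ∀ i j, i ≠ j → ∀ x ∈ G i, ∀ y ∈ G j, ⟪x, y⟫ = 0) (c : ι → ℝ) :
    ∃ S ∈ centroid ℝ g, IsAdjointPair innerForm innerForm S S ∧
      ∀ j, ∀ x ∈ G j, S x = c j • x := by
  choose p hp hpmem hpid using fun j => (hG j).exists_isOrthogonalProjection
  refine ⟨∑ j, c j • p j,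
    Subalgebra.sum_mem _ fun j _ => Subalgebra.smul_mem _ (hp j).mem_centroid _,
    Submodule.sum_mem innerForm.selfAdjointSubmodule fun j _ => Submodule.smul_mem _ _ (hp j).2.2.2,
    fun i x hx => ?_⟩
  rw [LinearMap.sum_apply, Finset.sum_eq_single i, LinearMap.smul_apply, hpid i x hx]
  · intro j _ hji
    rw [LinearMap.smul_apply, (hp j).apply_eq_zero (hpmem j) (horth i j (Ne.symm hji) x hx),
      smul_zero]
  · simp

theorem exists_eqOn_units_smul (hZ : center ℝ g ≤ ⁅(⊤ : LieIdeal ℝ g), ⊤⁆)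
    (hJ : IsOrthBiinvCplxStruct J) (hG : ∀ j, IsComplexIrreducibleFactor J (G j))
    (hJ' : IsOrthBiinvCplxStruct J') :
    ∃ ε : ι → ℤˣ, ∀ j, ∀ x ∈ G j, J' x = ((ε j : ℤ) : ℝ) • J x := by
  have (j : ι) : ∃ u : ℤˣ, ∀ x ∈ G j, J' x = ((u : ℤ) : ℝ) • J x :=
    ((hG j).eqOn_or_eqOn_neg hZ hJ hJ').elim (fun h => ⟨1, by simpa using h⟩)
      (fun h => ⟨-1, by simpa using h⟩)
  choose ε hε using this
  exact ⟨ε, hε⟩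

theorem ncard_setOf_isOrthBiinvCplxStruct [Fintype ι]
    (hZ : center ℝ g ≤ ⁅(⊤ : LieIdeal ℝ g), ⊤⁆) (hJ : IsOrthBiinvCplxStruct J)
    (hG : ∀ j, IsComplexIrreducibleFactor J (G j))
    (horth : ∀ i j, i ≠ j → ∀ x ∈ G i, ∀ y ∈ G j, ⟪x, y⟫ = 0)
    (hsup : ⨆ j, G j = ⊤) :
    {J' : Module.End ℝ g | IsOrthBiinvCplxStruct J'}.ncard = 2 ^ Fintype.card ι := by
  have hsq (u : ℤˣ) : ((u : ℤ) : ℝ) * ((u : ℤ) : ℝ) = 1 := by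
    rcases Int.units_eq_one_or u with rfl | rfl <;> norm_num
  choose S hS hSS hSG using fun ε : ι → ℤˣ =>
    exists_mem_centroid_eqOn_smul (fun j => (hG j).1.1) horth fun j => ((ε j : ℤ) : ℝ)
  have hJS (ε : ι → ℤˣ) (j : ι) (x : g) (hx : x ∈ G j) :
      (J * S ε) x = ((ε j : ℤ) : ℝ) • J x := by
    rw [Module.End.mul_apply, hSG ε j x hx, map_smul]
  have hmem (ε : ι → ℤˣ) : IsOrthBiinvCplxStruct (J * S ε) := by
    refine hJ.mul_of_isAdjointPair (hS ε) (hSS ε)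
      (linearMap_ext_of_iSup_eq_top hsup fun j x hx => ?_)
      (linearMap_ext_of_iSup_eq_top hsup fun j x hx => ?_)
    · rw [Module.End.mul_apply, hSG ε j x hx, map_smul, hSG ε j x hx, smul_smul, hsq, one_smul,
        Module.End.one_apply]
    · rw [hJS ε j x hx, Module.End.mul_apply, hSG ε j _ ((hG j).1.2 x hx)]
  have hrange : {J' | IsOrthBiinvCplxStruct J'} = Set.range fun ε => J * S ε := by
    ext J'
    refine ⟨fun hJ' => ?_, by rintro ⟨ε, rfl⟩; exact hmem ε⟩
    obtain ⟨ε, hε⟩ := exists_eqOn_units_smul hZ hJ hG hJ'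
    refine ⟨ε, linearMap_ext_of_iSup_eq_top hsup fun j x hx => ?_⟩
    rw [hJS ε j x hx, hε j x hx]
  have hinj : Function.Injective fun ε => J * S ε := by
    intro ε ε' hεε'
    funext j
    obtain ⟨x, hx, hx0⟩ := Submodule.exists_mem_ne_zero_of_ne_bot
      ((LieSubmodule.toSubmodule_eq_bot _).not.mpr (hG j).2.1)
    have hJx : J x ≠ 0 := fun h0 => hx0 (by rw [← neg_eq_zero, ← hJ.1 x, h0, map_zero])
    have := LinearMap.congr_fun hεε' x
    rw [hJS ε j x hx, hJS ε' j x hx] at this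
    exact Units.ext (Int.cast_injective (smul_left_injective ℝ hJx this))
  rw [hrange, Set.ncard_range_of_injective hinj, Nat.card_fun, Nat.card_eq_fintype_card,
    Fintype.card_units_int, Nat.card_eq_fintype_card]

end Decomposition

theorem stmt13_general (g : Type*) [LieRing g] [LieAlgebra ℝ g] [Inner ℝ g]
    [MetricLieAlgebra g]
    (hZ : ∀ x : g, (∀ y : g, ⁅x, y⁆ = 0) →
      x ∈ ⁅(⊤ : LieIdeal ℝ g), (⊤ : LieIdeal ℝ g)⁆)
    (J : g →ₗ[ℝ] g) (hJ : IsOrthBiinvCplxStruct J)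
    (k : ℕ) (G : Fin k → LieIdeal ℝ g)
    (hirr : ∀ j, IsComplexIrreducibleFactor J (G j))
    (horth : ∀ i j, i ≠ j → ∀ x ∈ G i, ∀ y ∈ G j, ⟪x, y⟫ = 0)
    (hsup : (⨆ j, G j) = ⊤) :
    (∀ J' : g →ₗ[ℝ] g, IsOrthBiinvCplxStruct J' →
      ∃ ε : Fin k → ℝ, (∀ j, ε j = 1 ∨ ε j = -1) ∧
        ∀ j, ∀ x ∈ G j, J' x = ε j • J x) ∧
    Set.ncard {J' : g →ₗ[ℝ] g | IsOrthBiinvCplxStruct J'} = 2 ^ k := by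
  have hcenter : center ℝ g ≤ ⁅(⊤ : LieIdeal ℝ g), ⊤⁆ := fun x hx =>
    hZ x fun y => by rw [← lie_skew, hx y, neg_zero]
  refine ⟨fun J' hJ' => ?_, by
    rw [ncard_setOf_isOrthBiinvCplxStruct hcenter hJ hirr horth hsup, Fintype.card_fin]⟩
  obtain ⟨ε, hε⟩ := exists_eqOn_units_smul hcenter hJ hirr hJ'
  refine ⟨fun j => ((ε j : ℤ) : ℝ), fun j => ?_, hε⟩
  rcases Int.units_eq_one_or (ε j) with h | h <;> simp [h]

/-- If `(g,J)` decomposes orthogonally into `k` irreducible complex factors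
`(gⱼ,Jⱼ)`, then every orthogonal bi-invariant complex structure on `g` is of the form
`±J₁ ⊕ ⋯ ⊕ ±J_k`, and `g` has exactly `2^k` orthogonal bi-invariant complex
structures. -/
theorem stmt13 (g : Type*) [LieRing g] [LieAlgebra ℝ g] [Inner ℝ g]
    [MetricLieAlgebra g] [Module.Finite ℝ g]
    (hZ : ∀ x : g, (∀ y : g, ⁅x, y⁆ = 0) →
      x ∈ ⁅(⊤ : LieIdeal ℝ g), (⊤ : LieIdeal ℝ g)⁆)
    (J : g →ₗ[ℝ] g) (hJ : IsOrthBiinvCplxStruct J)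
    (k : ℕ) (G : Fin k → LieIdeal ℝ g)
    (hirr : ∀ j, IsComplexIrreducibleFactor J (G j))
    (horth : ∀ i j, i ≠ j → ∀ x ∈ G i, ∀ y ∈ G j, ⟪x, y⟫ = 0)
    (hsup : (⨆ j, G j) = ⊤) :
    (∀ J' : g →ₗ[ℝ] g, IsOrthBiinvCplxStruct J' →
      ∃ ε : Fin k → ℝ, (∀ j, ε j = 1 ∨ ε j = -1) ∧
        ∀ j, ∀ x ∈ G j, J' x = ε j • J x) ∧
    Set.ncard {J' : g →ₗ[ℝ] g | IsOrthBiinvCplxStruct J'} = 2 ^ k :=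
  stmt13_general g hZ J hJ k G hirr horth hsup
end

section
/- On the 6-dimensional real nilpotent Lie algebra g with basis X₁,…,X₆ and nonzero brackets [X₁,X₃]=X₅, [X₁,X₄]=X₆, [X₂,X₃]=X₆, [X₂,X₄]=-X₅, the linear maps J₁ (X₁↦X₂, X₂↦-X₁, X₃↦X₄, X₄↦-X₃, X₅↦X₆, X₆↦-X₅) and J₂ (X₁↦X₂+X₆, X₂↦-X₁+X₅, X₃↦X₄, X₄↦-X₃, X₅↦X₆, X₆↦-X₅) are both bi-invariant complex structures, and J₁∘J₂ ≠ J₂∘J₁. Consequently there is no inner product on g making both J₁ and J₂ orthogonal. -/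
/-!
`J₂ - J₁` maps `X₁ ↦ X₆`, `X₂ ↦ X₅` and kills everything else, so it is a nonzero endomorphism
with square zero. If both `Jₖ` were orthogonal for an inner product `B`, each would be
skew-adjoint (`B (J x) y = B (J² x) (J y) = -B x (J y)`), hence so would their difference `N`;
but a skew-adjoint `N` with `N² x = 0` has `B (N x) (N x) = -B x (N² x) = 0`, so `N x = 0`.
-/

namespace Module.Basis

variable {ι R M : Type*} [CommRing R]

theorem forall_apply_apply_eq_neg [AddCommGroup M] [Module R M] (b : Basis ι R M)
    {J : M →ₗ[R] M} (h : ∀ i, J (J (b i)) = -b i) : ∀ x, J (J x) = -x :=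
  LinearMap.congr_fun (b.ext (f₁ := J ∘ₗ J) (f₂ := -LinearMap.id) h)

theorem forall_map_lie_eq_lie_map [LieRing M] [LieAlgebra R M] (b : Basis ι R M)
    {J : M →ₗ[R] M} (h : ∀ i j, J ⁅b i, b j⁆ = ⁅J (b i), b j⁆) :
    ∀ x y, J ⁅x, y⁆ = ⁅J x, y⁆ := by
  let ad : M →ₗ[R] Module.End R M := LieAlgebra.ad R M
  have key : ad.compr₂ J = ad ∘ₗ J := LinearMap.ext_basis b b h
  exact fun x y ↦ LinearMap.congr_fun₂ key x y

end Module.Basis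

namespace LinearMap

variable {R M : Type*} [CommRing R] [AddCommGroup M] [Module R M] {B : LinearMap.BilinForm R M}

theorem IsOrthogonal.isSkewAdjoint {J : M →ₗ[R] M} (hB : B.IsOrthogonal J)
    (hJ : ∀ x, J (J x) = -x) : B.IsSkewAdjoint J := fun x y ↦ by
  rw [← hB, hJ, map_neg, neg_apply, Pi.neg_apply, map_neg]

theorem IsSkewAdjoint.apply_eq_zero_of_apply_apply_eq_zero [PartialOrder R]
    (hB : ∀ x, x ≠ 0 → 0 < B x x) {N : M → M} (hN : B.IsSkewAdjoint N) {x : M}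
    (hx : N (N x) = 0) : N x = 0 := by
  by_contra h
  have := hB _ h
  rw [hN, Pi.neg_apply, hx, neg_zero, map_zero] at this
  exact lt_irrefl 0 this

theorem IsSkewAdjoint.sub {f g : Module.End R M} (hf : B.IsSkewAdjoint f)
    (hg : B.IsSkewAdjoint g) : B.IsSkewAdjoint ⇑(f - g) :=
  (mem_skewAdjointSubmodule _).1 <|
    sub_mem ((mem_skewAdjointSubmodule f).2 hf) ((mem_skewAdjointSubmodule g).2 hg)

end LinearMap

/-- On the 6-dimensional nilpotent Lie algebra with basis `X₁,…,X₆` and nonzero brackets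
`[X₁,X₃]=X₅`, `[X₁,X₄]=X₆`, `[X₂,X₃]=X₆`, `[X₂,X₄]=-X₅`, the maps `J₁` and `J₂` below
are bi-invariant complex structures which do not commute; hence no inner product on `g`
makes both of them orthogonal. (Indices are shifted by one: `X i` is `X_{i+1}`.) -/
theorem stmt17 (g : Type*) [LieRing g] [LieAlgebra ℝ g]
    (X : Module.Basis (Fin 6) ℝ g)
    (h13 : ⁅X 0, X 2⁆ = X 4) (h14 : ⁅X 0, X 3⁆ = X 5)
    (h23 : ⁅X 1, X 2⁆ = X 5) (h24 : ⁅X 1, X 3⁆ = -X 4)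
    (h12 : ⁅X 0, X 1⁆ = 0) (h34 : ⁅X 2, X 3⁆ = 0)
    (hc : ∀ i j : Fin 6, 4 ≤ (j : ℕ) → ⁅X i, X j⁆ = 0)
    (J₁ J₂ : g →ₗ[ℝ] g)
    (hJ₁ : J₁ (X 0) = X 1 ∧ J₁ (X 1) = -X 0 ∧ J₁ (X 2) = X 3 ∧ J₁ (X 3) = -X 2 ∧
      J₁ (X 4) = X 5 ∧ J₁ (X 5) = -X 4)
    (hJ₂ : J₂ (X 0) = X 1 + X 5 ∧ J₂ (X 1) = -X 0 + X 4 ∧ J₂ (X 2) = X 3 ∧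
      J₂ (X 3) = -X 2 ∧ J₂ (X 4) = X 5 ∧ J₂ (X 5) = -X 4) :
    ((∀ x : g, J₁ (J₁ x) = -x) ∧ ∀ x y : g, J₁ ⁅x, y⁆ = ⁅J₁ x, y⁆) ∧
    ((∀ x : g, J₂ (J₂ x) = -x) ∧ ∀ x y : g, J₂ ⁅x, y⁆ = ⁅J₂ x, y⁆) ∧
    J₁ ∘ₗ J₂ ≠ J₂ ∘ₗ J₁ ∧
    ¬ ∃ B : g →ₗ[ℝ] g →ₗ[ℝ] ℝ, (∀ x y : g, B x y = B y x) ∧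
        (∀ x : g, x ≠ 0 → 0 < B x x) ∧
        (∀ x y : g, B (J₁ x) (J₁ y) = B x y) ∧
        (∀ x y : g, B (J₂ x) (J₂ y) = B x y) := by
  obtain ⟨a0, a1, a2, a3, a4, a5⟩ := hJ₁
  obtain ⟨b0, b1, b2, b3, b4, b5⟩ := hJ₂
  have hc_left : ∀ i j : Fin 6, 4 ≤ (i : ℕ) → ⁅X i, X j⁆ = 0 := fun i j hi ↦ by
    rw [← lie_skew, hc j i hi, neg_zero]
  have skew : ∀ {i j : Fin 6} {x : g}, ⁅X i, X j⁆ = x → ⁅X j, X i⁆ = -x := fun h ↦ by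
    rw [← lie_skew, h]
  have hsq₁ := X.forall_apply_apply_eq_neg (J := J₁) (by intro i; fin_cases i <;> simp [*])
  have hsq₂ := X.forall_apply_apply_eq_neg (J := J₂) (by intro i; fin_cases i <;> simp [*])
  refine ⟨⟨hsq₁, X.forall_map_lie_eq_lie_map ?_⟩, ⟨hsq₂, X.forall_map_lie_eq_lie_map ?_⟩, ?_, ?_⟩
  · intro i j; fin_cases i <;> fin_cases j <;> simp [*, skew h13, skew h14, skew h23, skew h24]
  · intro i j; fin_cases i <;> fin_cases j <;> simp [*, skew h13, skew h14, skew h23, skew h24]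
  · intro h
    have := congr(X.repr ($h (X 0)) 4)
    norm_num [a0, a1, a5, b0, b1] at this
  · rintro ⟨B, -, hpos, hB₁, hB₂⟩
    have hN := (LinearMap.IsOrthogonal.isSkewAdjoint hB₁ hsq₁).sub
      (LinearMap.IsOrthogonal.isSkewAdjoint hB₂ hsq₂)
    have := hN.apply_eq_zero_of_apply_apply_eq_zero hpos (x := X 0)
      (by simp [a0, a5, b0, b5])
    exact X.ne_zero 5 (by simpa [a0, b0] using this)
end

section
/- Let g be the real Lie algebra underlying the complex Heisenberg algebra, with basis E₁,…,E₆ and nonzero brackets [E₁,E₃]=E₅, [E₂,E₄]=-E₅, [E₂,E₃]=E₆, [E₁,E₄]=E₆. If J is any bi-invariant complex structure on g, then there exists b ∈ {1,-1} with J(E₅) = bE₆ and J(E₆) = -bE₅. Consequently, for any inner product on g for which E₅ and E₆ are not orthogonal, g admits no orthogonal bi-invariant complex structure. -/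
/-!
A bi-invariant `J` is determined on the centre by `J E₁`: writing `J E₁ = ∑ aᵢ Eᵢ`, bi-invariance
gives `J E₅ = J ⁅E₁, E₃⁆ = ⁅J E₁, E₃⁆ = a₁ E₅ + a₂ E₆` and likewise `J E₆ = a₁ E₆ - a₂ E₅`, so on
the centre `J` is multiplication by the complex number `a₁ + a₂ i`. Then `J² = -1` forces
`a₁ + a₂ i = ±i`. If moreover `J` preserves a symmetric form `B`, then
`B(E₅, E₆) = B(J E₅, J E₆) = -B(E₆, E₅)`, so `E₅ ⊥ E₆`.
In the code indices are shifted: `E i` is `Eᵢ₊₁`.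
-/

theorem LinearMap.coeffs_of_apply_apply_eq_neg {M : Type*} [AddCommGroup M] [Module ℝ M]
    {J : M →ₗ[ℝ] M} {u v : M} (huv : LinearIndependent ℝ ![u, v]) {a c : ℝ}
    (hu : J u = a • u + c • v) (hv : J v = a • v - c • u) (hJ : J (J u) = -u) :
    a = 0 ∧ (c = 1 ∨ c = -1) := by
  have hsum : (a * a - c * c + 1) • u + (2 * a * c) • v = 0 := by
    rw [hu, map_add, map_smul, map_smul, hu, hv] at hJ
    rw [← sub_eq_zero.mpr hJ]
    module
  obtain ⟨hre, him⟩ := LinearIndependent.pair_iff.mp huv _ _ hsum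
  have ha : a = 0 := by
    rcases mul_eq_zero.mp (by linarith : a * c = 0) with h | h
    · exact h
    · nlinarith
  exact ⟨ha, mul_self_eq_one_iff.mp (by subst ha; linarith)⟩

theorem LinearMap.apply_eq_zero_of_apply_smul_neg_smul {M : Type*} [AddCommGroup M] [Module ℝ M]
    {B : M →ₗ[ℝ] M →ₗ[ℝ] ℝ} (hB : ∀ x y, B x y = B y x) {u v : M} (b : ℝ)
    (h : B (b • v) (-(b • u)) = B u v) : B u v = 0 := by
  simp only [map_smul, map_neg, LinearMap.smul_apply, smul_eq_mul, hB v u] at h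
  have h' : (b * b + 1) * B u v = 0 := by linarith
  exact (mul_eq_zero.mp h').resolve_left (by nlinarith [mul_self_nonneg b])

section ComplexHeisenberg

variable {g : Type*} [LieRing g] [LieAlgebra ℝ g] (E : Module.Basis (Fin 6) ℝ g)

theorem lie_basis_two_eq (h13 : ⁅E 0, E 2⁆ = E 4) (h23 : ⁅E 1, E 2⁆ = E 5)
    (h34 : ⁅E 2, E 3⁆ = 0) (hc : ∀ i j : Fin 6, 4 ≤ (j : ℕ) → ⁅E i, E j⁆ = 0) (v : g) :
    ⁅v, E 2⁆ = E.repr v 0 • E 4 + E.repr v 1 • E 5 := by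
  have h32 : ⁅E 3, E 2⁆ = 0 := by rw [← lie_skew, h34, neg_zero]
  have h42 : ⁅E 4, E 2⁆ = 0 := by rw [← lie_skew, hc 2 4 (by decide), neg_zero]
  have h52 : ⁅E 5, E 2⁆ = 0 := by rw [← lie_skew, hc 2 5 (by decide), neg_zero]
  conv_lhs => rw [← E.sum_repr v, Fin.sum_univ_six]
  simp [add_lie, smul_lie, h13, h23, h32, h42, h52]

theorem lie_basis_three_eq (h24 : ⁅E 1, E 3⁆ = -E 4) (h14 : ⁅E 0, E 3⁆ = E 5)
    (h34 : ⁅E 2, E 3⁆ = 0) (hc : ∀ i j : Fin 6, 4 ≤ (j : ℕ) → ⁅E i, E j⁆ = 0) (v : g) :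
    ⁅v, E 3⁆ = E.repr v 0 • E 5 - E.repr v 1 • E 4 := by
  have h43 : ⁅E 4, E 3⁆ = 0 := by rw [← lie_skew, hc 3 4 (by decide), neg_zero]
  have h53 : ⁅E 5, E 3⁆ = 0 := by rw [← lie_skew, hc 3 5 (by decide), neg_zero]
  conv_lhs => rw [← E.sum_repr v, Fin.sum_univ_six]
  simp only [add_lie, smul_lie, h14, h24, smul_neg, h34, smul_zero, add_zero, lie_self, h43, h53]
  module

theorem linearIndependent_basis_four_five : LinearIndependent ℝ ![E 4, E 5] := by
  convert E.linearIndependent.comp ![4, 5] (by decide) using 1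
  ext i
  fin_cases i <;> rfl

theorem exists_apply_basis_four_five (h13 : ⁅E 0, E 2⁆ = E 4) (h24 : ⁅E 1, E 3⁆ = -E 4)
    (h23 : ⁅E 1, E 2⁆ = E 5) (h14 : ⁅E 0, E 3⁆ = E 5) (h34 : ⁅E 2, E 3⁆ = 0)
    (hc : ∀ i j : Fin 6, 4 ≤ (j : ℕ) → ⁅E i, E j⁆ = 0) (J : g →ₗ[ℝ] g)
    (hJ : ∀ x, J (J x) = -x) (hbi : ∀ x y, J ⁅x, y⁆ = ⁅J x, y⁆) :
    ∃ b : ℝ, (b = 1 ∨ b = -1) ∧ J (E 4) = b • E 5 ∧ J (E 5) = -(b • E 4) := by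
  have hJ4 : J (E 4) = E.repr (J (E 0)) 0 • E 4 + E.repr (J (E 0)) 1 • E 5 := by
    rw [← lie_basis_two_eq E h13 h23 h34 hc, ← hbi, h13]
  have hJ5 : J (E 5) = E.repr (J (E 0)) 0 • E 5 - E.repr (J (E 0)) 1 • E 4 := by
    rw [← lie_basis_three_eq E h24 h14 h34 hc, ← hbi, h14]
  obtain ⟨ha, hb⟩ := LinearMap.coeffs_of_apply_apply_eq_neg
    (linearIndependent_basis_four_five E) hJ4 hJ5 (hJ (E 4))
  exact ⟨_, hb, by simp [hJ4, ha], by simp [hJ5, ha]⟩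

end ComplexHeisenberg

theorem stmt18_general (g : Type*) [LieRing g] [LieAlgebra ℝ g]
    (E : Module.Basis (Fin 6) ℝ g)
    (h13 : ⁅E 0, E 2⁆ = E 4) (h24 : ⁅E 1, E 3⁆ = -E 4)
    (h23 : ⁅E 1, E 2⁆ = E 5) (h14 : ⁅E 0, E 3⁆ = E 5)
    (h34 : ⁅E 2, E 3⁆ = 0)
    (hc : ∀ i j : Fin 6, 4 ≤ (j : ℕ) → ⁅E i, E j⁆ = 0) :
    (∀ J : g →ₗ[ℝ] g, (∀ x : g, J (J x) = -x) → (∀ x y : g, J ⁅x, y⁆ = ⁅J x, y⁆) →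
      ∃ b : ℝ, (b = 1 ∨ b = -1) ∧ J (E 4) = b • E 5 ∧ J (E 5) = -(b • E 4)) ∧
    ∀ B : g →ₗ[ℝ] g →ₗ[ℝ] ℝ, (∀ x y : g, B x y = B y x) →
      (∀ x : g, x ≠ 0 → 0 < B x x) → B (E 4) (E 5) ≠ 0 →
      ¬ ∃ J : g →ₗ[ℝ] g, (∀ x : g, J (J x) = -x) ∧
          (∀ x y : g, J ⁅x, y⁆ = ⁅J x, y⁆) ∧
          (∀ x y : g, B (J x) (J y) = B x y) := by
  have centre := exists_apply_basis_four_five E h13 h24 h23 h14 h34 hc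
  refine ⟨centre, fun B hB _ hne ⟨J, hJ, hbi, horth⟩ => hne ?_⟩
  obtain ⟨b, -, hJ4, hJ5⟩ := centre J hJ hbi
  refine LinearMap.apply_eq_zero_of_apply_smul_neg_smul hB b ?_
  rw [← hJ4, ← hJ5, horth]

/-- On the real Lie algebra underlying the complex Heisenberg algebra, with basis
`E₁,…,E₆` and nonzero brackets `[E₁,E₃]=E₅`, `[E₂,E₄]=-E₅`, `[E₂,E₃]=E₆`, `[E₁,E₄]=E₆`,
every bi-invariant complex structure `J` satisfies `J(E₅) = ±E₆`, `J(E₆) = ∓E₅`.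
Consequently, for any inner product in which `E₅` and `E₆` are not orthogonal there is
no orthogonal bi-invariant complex structure. (Indices shifted: `E i` is `E_{i+1}`.) -/
theorem stmt18 (g : Type*) [LieRing g] [LieAlgebra ℝ g]
    (E : Module.Basis (Fin 6) ℝ g)
    (h13 : ⁅E 0, E 2⁆ = E 4) (h24 : ⁅E 1, E 3⁆ = -E 4)
    (h23 : ⁅E 1, E 2⁆ = E 5) (h14 : ⁅E 0, E 3⁆ = E 5)
    (h12 : ⁅E 0, E 1⁆ = 0) (h34 : ⁅E 2, E 3⁆ = 0)
    (hc : ∀ i j : Fin 6, 4 ≤ (j : ℕ) → ⁅E i, E j⁆ = 0) :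
    (∀ J : g →ₗ[ℝ] g, (∀ x : g, J (J x) = -x) → (∀ x y : g, J ⁅x, y⁆ = ⁅J x, y⁆) →
      ∃ b : ℝ, (b = 1 ∨ b = -1) ∧ J (E 4) = b • E 5 ∧ J (E 5) = -(b • E 4)) ∧
    ∀ B : g →ₗ[ℝ] g →ₗ[ℝ] ℝ, (∀ x y : g, B x y = B y x) →
      (∀ x : g, x ≠ 0 → 0 < B x x) → B (E 4) (E 5) ≠ 0 →
      ¬ ∃ J : g →ₗ[ℝ] g, (∀ x : g, J (J x) = -x) ∧
          (∀ x y : g, J ⁅x, y⁆ = ⁅J x, y⁆) ∧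
          (∀ x y : g, B (J x) (J y) = B x y) :=
  stmt18_general g E h13 h24 h23 h14 h34 hc
end
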